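/- Let L ≥ 1 and let X_1, …, X_L be mutually independent Nakagami random variables, where X_l has shape m_l > 0 and scale Ω_l > 0, and suppose m_l > m_1 for every l = 2, …, L. Then for every s > 0, the moment generating function of the product satisfies E[exp(−s ∏_{l=1}^L X_l)] ≤ 2 (Γ(2m_1)/Γ(m_1)) · (∏_{l=2}^L Γ(m_l − m_1)/Γ(m_l)) · (∏_{l=1}^L Ω_l^{m_1}) · s^{−2m_1}. -/

import Mathlib

/-! Condition on `Y = ∏_{l ≥ 2} X_l`, which is independent of `X_1`. Bounding the Gaussian factor
`exp (-Ω₁ x²)` of the density by `1`, the Laplace transform of `X_1` at `s y` is at most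
`2 Ω₁^m₁ Γ(2m₁) / Γ(m₁) · (s y)^(-2m₁)`. It remains to integrate `Y^(-2m₁)`: by independence this
is `∏_{l ≥ 2} E[X_l^(-2m₁)]`, and each negative moment `Ω_l^m₁ Γ(m_l - m₁) / Γ(m_l)` is finite
precisely because `m_l > m₁`. -/

open MeasureTheory ProbabilityTheory Real

noncomputable def nakagamiPDF (m Ω x : ℝ) : ℝ :=
  if 0 < x then 2 * Ω ^ m / Real.Gamma m * x ^ (2 * m - 1) * Real.exp (-Ω * x ^ 2) else 0

def IsNakagami {E : Type*} [MeasurableSpace E] (P : MeasureTheory.Measure E)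
    (X : E → ℝ) (m Ω : ℝ) : Prop :=
  MeasureTheory.Measure.map X P =
    MeasureTheory.volume.withDensity (fun x => ENNReal.ofReal (nakagamiPDF m Ω x))

open Finset Function
open scoped ENNReal

noncomputable def nakagamiMeasure (m Ω : ℝ) : Measure ℝ :=
  volume.withDensity fun x => ENNReal.ofReal (nakagamiPDF m Ω x)

lemma IsNakagami.map_eq {E : Type*} [MeasurableSpace E] {P : Measure E} {X : E → ℝ} {m Ω : ℝ}
    (h : IsNakagami P X m Ω) : P.map X = nakagamiMeasure m Ω :=
  h

lemma measurable_nakagamiPDF (m Ω : ℝ) : Measurable (nakagamiPDF m Ω) :=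
  Measurable.ite measurableSet_Ioi (by fun_prop) measurable_const

lemma ae_pos_nakagamiMeasure (m Ω : ℝ) : ∀ᵐ x ∂nakagamiMeasure m Ω, 0 < x := by
  rw [nakagamiMeasure, ae_withDensity_iff (measurable_nakagamiPDF m Ω).ennreal_ofReal]
  refine ae_of_all _ fun x hx => ?_
  by_contra hx₀
  simp [nakagamiPDF, hx₀] at hx

lemma IsNakagami.ae_pos {E : Type*} [MeasurableSpace E] {P : Measure E} {X : E → ℝ} {m Ω : ℝ}
    (h : IsNakagami P X m Ω) (hX : Measurable X) : ∀ᵐ ω ∂P, 0 < X ω :=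
  ae_of_ae_map hX.aemeasurable (h.map_eq ▸ ae_pos_nakagamiMeasure m Ω)

lemma lintegral_nakagamiMeasure {f : ℝ → ℝ≥0∞} (hf : Measurable f) (m Ω : ℝ) :
    ∫⁻ x, f x ∂nakagamiMeasure m Ω =
      ∫⁻ x in Set.Ioi 0,
        ENNReal.ofReal (2 * Ω ^ m / Gamma m * x ^ (2 * m - 1) * exp (-Ω * x ^ 2)) * f x := by
  rw [nakagamiMeasure, lintegral_withDensity_eq_lintegral_mul _
    (measurable_nakagamiPDF m Ω).ennreal_ofReal hf, ← lintegral_indicator measurableSet_Ioi]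
  refine lintegral_congr fun x => ?_
  by_cases hx : 0 < x <;> simp [nakagamiPDF, hx]

lemma lintegral_rpow_nakagamiMeasure {m Ω p : ℝ} (hm : 0 < m) (hΩ : 0 < Ω) (hp : -(2 * m) < p) :
    ∫⁻ x, ENNReal.ofReal (x ^ p) ∂nakagamiMeasure m Ω =
      ENNReal.ofReal (Ω ^ (-p / 2) * Gamma (m + p / 2) / Gamma m) := by
  have hGamma : 0 < Gamma m := Gamma_pos_of_pos hm
  rw [lintegral_nakagamiMeasure (by fun_prop)]
  have hdensity : ∀ x ∈ Set.Ioi (0 : ℝ),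
      ENNReal.ofReal (2 * Ω ^ m / Gamma m * x ^ (2 * m - 1) * exp (-Ω * x ^ 2)) *
        ENNReal.ofReal (x ^ p) =
      ENNReal.ofReal (2 * Ω ^ m / Gamma m * (x ^ (2 * m + p - 1) * exp (-Ω * x ^ (2 : ℝ)))) := by
    intro x (hx : 0 < x)
    rw [← ENNReal.ofReal_mul (by positivity), show 2 * m + p - 1 = (2 * m - 1) + p by ring,
      rpow_add hx, rpow_two]
    ring_nf
  rw [setLIntegral_congr_fun measurableSet_Ioi hdensity, ← ofReal_integral_eq_lintegral_ofReal]
  · rw [integral_const_mul, integral_rpow_mul_exp_neg_mul_rpow two_pos (by linarith) hΩ,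
      show (2 * m + p - 1 + 1) / 2 = m + p / 2 by ring,
      show -(2 * m + p - 1 + 1) / 2 = -m + -p / 2 by ring, rpow_add hΩ, rpow_neg hΩ.le]
    field_simp
  · exact (integrableOn_rpow_mul_exp_neg_mul_rpow (by linarith) two_pos hΩ).const_mul _
  · filter_upwards [ae_restrict_mem measurableSet_Ioi] with x (hx : 0 < x)
    positivity

lemma IsNakagami.lintegral_rpow {E : Type*} [MeasurableSpace E] {P : Measure E} {X : E → ℝ}
    {m Ω p : ℝ} (h : IsNakagami P X m Ω) (hX : Measurable X) (hm : 0 < m) (hΩ : 0 < Ω)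
    (hp : -(2 * m) < p) :
    ∫⁻ ω, ENNReal.ofReal (X ω ^ p) ∂P =
      ENNReal.ofReal (Ω ^ (-p / 2) * Gamma (m + p / 2) / Gamma m) := by
  rw [← lintegral_map (f := fun x => ENNReal.ofReal (x ^ p)) (by fun_prop) hX, h.map_eq,
    lintegral_rpow_nakagamiMeasure hm hΩ hp]

lemma lintegral_exp_neg_mul_nakagamiMeasure_le {m Ω t : ℝ} (hm : 0 < m) (hΩ : 0 ≤ Ω)
    (ht : 0 < t) :
    ∫⁻ x, ENNReal.ofReal (exp (-(t * x))) ∂nakagamiMeasure m Ω ≤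
      ENNReal.ofReal (2 * Ω ^ m * Gamma (2 * m) / Gamma m * t ^ (-(2 * m))) := by
  have hGamma : 0 < Gamma m := Gamma_pos_of_pos hm
  rw [lintegral_nakagamiMeasure (by fun_prop)]
  have hdensity : ∀ x ∈ Set.Ioi (0 : ℝ),
      ENNReal.ofReal (2 * Ω ^ m / Gamma m * x ^ (2 * m - 1) * exp (-Ω * x ^ 2)) *
        ENNReal.ofReal (exp (-(t * x))) ≤
      ENNReal.ofReal (2 * Ω ^ m / Gamma m * (x ^ (2 * m - 1) * exp (-(t * x)))) := by
    intro x (hx : 0 < x)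
    rw [← ENNReal.ofReal_mul (by positivity)]
    refine ENNReal.ofReal_le_ofReal ?_
    have hgauss : exp (-Ω * x ^ 2) ≤ 1 := exp_le_one_iff.2 (by nlinarith)
    calc 2 * Ω ^ m / Gamma m * x ^ (2 * m - 1) * exp (-Ω * x ^ 2) * exp (-(t * x))
        ≤ 2 * Ω ^ m / Gamma m * x ^ (2 * m - 1) * 1 * exp (-(t * x)) := by gcongr
      _ = _ := by ring
  refine (setLIntegral_mono' measurableSet_Ioi hdensity).trans_eq ?_
  rw [← ofReal_integral_eq_lintegral_ofReal]
  · rw [integral_const_mul, integral_rpow_mul_exp_neg_mul_Ioi (by linarith) ht, one_div,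
      inv_rpow ht.le, ← rpow_neg ht.le]
    ring_nf
  · refine Integrable.const_mul ?_ _
    refine (integrableOn_rpow_mul_exp_neg_mul_rpow (p := 1) (s := 2 * m - 1) (by linarith) one_pos
      ht).congr_fun (fun x _ => ?_) measurableSet_Ioi
    simp only [rpow_one, neg_mul]
  · filter_upwards [ae_restrict_mem measurableSet_Ioi] with x (hx : 0 < x)
    positivity

section Independence

variable {E : Type*} [MeasurableSpace E] {P : Measure E}

lemma IndepFun.lintegral_comp_le {α β : Type*} [MeasurableSpace α] [MeasurableSpace β]
    [IsFiniteMeasure P] {X : E → α} {Y : E → β} (hX : Measurable X) (hY : Measurable Y)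
    (hXY : IndepFun X Y P) {f : α → β → ℝ≥0∞} (hf : Measurable (uncurry f)) {g : β → ℝ≥0∞}
    (hfg : ∀ᵐ y ∂P.map Y, ∫⁻ x, f x y ∂P.map X ≤ g y) :
    ∫⁻ ω, f (X ω) (Y ω) ∂P ≤ ∫⁻ ω, g (Y ω) ∂P :=
  calc ∫⁻ ω, f (X ω) (Y ω) ∂P = ∫⁻ z, uncurry f z ∂P.map fun ω => (X ω, Y ω) :=
        (lintegral_map hf (hX.prodMk hY)).symm
    _ = ∫⁻ y, ∫⁻ x, f x y ∂P.map X ∂P.map Y := by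
        rw [(indepFun_iff_map_prod_eq_prod_map_map hX.aemeasurable hY.aemeasurable).1 hXY,
          lintegral_prod_symm' _ hf]
        rfl
    _ ≤ ∫⁻ y, g y ∂P.map Y := lintegral_mono_ae hfg
    _ ≤ ∫⁻ ω, g (Y ω) ∂P := lintegral_map_le g Y

lemma lintegral_ofReal_prod_rpow_of_iIndepFun {ι : Type*} {X : ι → E → ℝ}
    (hX : ∀ i, Measurable (X i)) (hIndep : iIndepFun X P) (s : Finset ι)
    (hnonneg : ∀ i ∈ s, ∀ᵐ ω ∂P, 0 ≤ X i ω) (p : ℝ) :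
    ∫⁻ ω, ENNReal.ofReal ((∏ i ∈ s, X i ω) ^ p) ∂P =
      ∏ i ∈ s, ∫⁻ ω, ENNReal.ofReal (X i ω ^ p) ∂P := by
  rw [← lintegral_prod_eq_prod_lintegral_of_indepFun s (fun i ω => ENNReal.ofReal (X i ω ^ p))
    (hIndep.comp (fun _ x => ENNReal.ofReal (x ^ p)) fun _ => by fun_prop)
    fun i => by fun_prop]
  refine lintegral_congr_ae ?_
  filter_upwards [(Filter.eventually_all_finset s).2 hnonneg] with ω hω
  rw [← finsetProd_rpow s _ hω, ENNReal.ofReal_prod_of_nonneg fun i hi => rpow_nonneg (hω i hi) p]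

end Independence

lemma lintegral_exp_neg_mul_prod_nakagami_le {E ι : Type*} [MeasurableSpace E] [Fintype ι]
    [DecidableEq ι] {P : Measure E} {m Ω : ι → ℝ} {X : ι → E → ℝ} (i₀ : ι) (hm : 0 < m i₀)
    (hΩ : ∀ i, 0 < Ω i) (hX : ∀ i, Measurable (X i))
    (hNak : ∀ i, IsNakagami P (X i) (m i) (Ω i)) (hIndep : iIndepFun X P)
    (hm₀ : ∀ i ≠ i₀, m i₀ < m i) {s : ℝ} (hs : 0 < s) :
    ∫⁻ ω, ENNReal.ofReal (exp (-s * ∏ i, X i ω)) ∂P ≤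
      ENNReal.ofReal (2 * Ω i₀ ^ m i₀ * Gamma (2 * m i₀) / Gamma (m i₀) * s ^ (-(2 * m i₀))) *
        ∏ i ∈ univ.erase i₀, ENNReal.ofReal (Ω i ^ m i₀ * Gamma (m i - m i₀) / Gamma (m i)) := by
  have := hIndep.isProbabilityMeasure
  set c := m i₀
  set C := 2 * Ω i₀ ^ c * Gamma (2 * c) / Gamma c * s ^ (-(2 * c))
  have hC_nonneg : 0 ≤ C := by
    have := hΩ i₀
    have := Gamma_pos_of_pos hm
    have := Gamma_pos_of_pos (by positivity : 0 < 2 * c)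
    positivity
  set Y := ∏ i ∈ univ.erase i₀, X i
  have hY : Measurable Y := by
    simpa only [Y, ← Finset.prod_apply] using Finset.measurable_prod _ fun i _ => hX i
  have hY_pos : ∀ᵐ y ∂P.map Y, 0 < y := by
    refine (ae_map_iff hY.aemeasurable measurableSet_Ioi).2 ?_
    filter_upwards [ae_all_iff.2 fun i => (hNak i).ae_pos (hX i)] with ω hω
    simpa [Y, Finset.prod_apply] using Finset.prod_pos fun i _ => hω i
  have hLaplace : ∀ᵐ y ∂P.map Y, ∫⁻ x, ENNReal.ofReal (exp (-(s * y * x))) ∂P.map (X i₀) ≤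
      ENNReal.ofReal C * ENNReal.ofReal (y ^ (-(2 * c))) := by
    filter_upwards [hY_pos] with y hy
    rw [(hNak i₀).map_eq, ← ENNReal.ofReal_mul hC_nonneg]
    refine (lintegral_exp_neg_mul_nakagamiMeasure_le hm (hΩ i₀).le (by positivity)).trans_eq ?_
    rw [mul_rpow hs.le hy.le]
    simp only [C]
    ring_nf
  have hmoment : ∀ i ∈ univ.erase i₀, ∫⁻ ω, ENNReal.ofReal (X i ω ^ (-(2 * c))) ∂P =
      ENNReal.ofReal (Ω i ^ c * Gamma (m i - c) / Gamma (m i)) := by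
    intro i hi
    have hci : c < m i := hm₀ i (Finset.ne_of_mem_erase hi)
    rw [(hNak i).lintegral_rpow (hX i) (hm.trans hci) (hΩ i) (by linarith)]
    ring_nf
  calc ∫⁻ ω, ENNReal.ofReal (exp (-s * ∏ i, X i ω)) ∂P
      = ∫⁻ ω, ENNReal.ofReal (exp (-(s * Y ω * X i₀ ω))) ∂P := by
        refine lintegral_congr fun ω => ?_
        rw [← Finset.mul_prod_erase univ _ (mem_univ i₀)]
        simp only [Y, Finset.prod_apply]
        ring_nf
    _ ≤ ∫⁻ ω, ENNReal.ofReal C * ENNReal.ofReal (Y ω ^ (-(2 * c))) ∂P :=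
        IndepFun.lintegral_comp_le (hX i₀) hY
          (hIndep.indepFun_finsetProd_of_notMem hX (notMem_erase i₀ univ)).symm
          (by fun_prop) hLaplace
    _ = _ := by
        rw [lintegral_const_mul _ (by fun_prop), ← Finset.prod_congr rfl hmoment]
        simp only [Y, Finset.prod_apply]
        rw [lintegral_ofReal_prod_rpow_of_iIndepFun hX hIndep _
          fun i _ => ((hNak i).ae_pos (hX i)).mono fun _ h => h.le]

theorem prod_nakagami_mgf_upper_bound_general
    {E : Type*} [MeasurableSpace E] (P : Measure E)
    (L : ℕ) (hL : 0 < L)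
    (m Ωp : Fin L → ℝ) (hm : ∀ l, 0 < m l) (hΩ : ∀ l, 0 < Ωp l)
    (X : Fin L → E → ℝ) (hX : ∀ l, Measurable (X l))
    (hNak : ∀ l, IsNakagami P (X l) (m l) (Ωp l))
    (hIndep : iIndepFun X P)
    (hm1 : ∀ l, l ≠ ⟨0, hL⟩ → m ⟨0, hL⟩ < m l)
    (s : ℝ) (hs : 0 < s) :
    ∫ ω, Real.exp (-s * ∏ l, X l ω) ∂P ≤
      2 * (Real.Gamma (2 * m ⟨0, hL⟩) / Real.Gamma (m ⟨0, hL⟩)) *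
        (∏ l ∈ Finset.univ.erase ⟨0, hL⟩,
          Real.Gamma (m l - m ⟨0, hL⟩) / Real.Gamma (m l)) *
        (∏ l, Ωp l ^ m ⟨0, hL⟩) * s ^ (-(2 * m ⟨0, hL⟩)) := by
  set i₀ : Fin L := ⟨0, hL⟩
  set c := m i₀
  have hfactor_nonneg : ∀ i ∈ univ.erase i₀, 0 ≤ Ωp i ^ c * Gamma (m i - c) / Gamma (m i) :=
    fun i hi => by
      have := Gamma_pos_of_pos (sub_pos.2 (hm1 i (Finset.ne_of_mem_erase hi)))
      have := Gamma_pos_of_pos (hm i)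
      have := hΩ i
      positivity
  have hC_nonneg : 0 ≤ 2 * Ωp i₀ ^ c * Gamma (2 * c) / Gamma c * s ^ (-(2 * c)) := by
    have := Gamma_pos_of_pos (hm i₀)
    have := Gamma_pos_of_pos (by linarith [hm i₀] : 0 < 2 * c)
    have := hΩ i₀
    positivity
  have hRHS : 2 * Ωp i₀ ^ c * Gamma (2 * c) / Gamma c * s ^ (-(2 * c)) *
      ∏ i ∈ univ.erase i₀, Ωp i ^ c * Gamma (m i - c) / Gamma (m i) =
      2 * (Gamma (2 * c) / Gamma c) * (∏ i ∈ univ.erase i₀, Gamma (m i - c) / Gamma (m i)) *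
        (∏ i, Ωp i ^ c) * s ^ (-(2 * c)) := by
    simp_rw [mul_div_assoc, Finset.prod_mul_distrib,
      ← Finset.mul_prod_erase univ (fun i => Ωp i ^ c) (mem_univ i₀)]
    ring
  rw [integral_eq_lintegral_of_nonneg_ae (ae_of_all _ fun ω => (exp_pos _).le) (by fun_prop)]
  refine ENNReal.toReal_le_of_le_ofReal
    (hRHS ▸ mul_nonneg hC_nonneg (prod_nonneg hfactor_nonneg)) ?_
  refine (lintegral_exp_neg_mul_prod_nakagami_le i₀ (hm i₀) hΩ hX hNak hIndep hm1 hs).trans_eq ?_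
  rw [← ENNReal.ofReal_prod_of_nonneg hfactor_nonneg, ← ENNReal.ofReal_mul hC_nonneg, hRHS]

/-- Upper bound on the MGF of a product of independent Nakagami random variables
`X_1, …, X_L` (indexed by `Fin L`, with `X_1 = X ⟨0, hL⟩`), assuming `m_l > m_1` for `l ≥ 2`:
for `s > 0`,
`E[exp(-s ∏ X_l)] ≤ 2 (Γ(2m_1)/Γ(m_1)) (∏_{l≥2} Γ(m_l - m_1)/Γ(m_l)) (∏ Ω_l^{m_1}) s^{-2m_1}`. -/
theorem prod_nakagami_mgf_upper_bound
    {E : Type*} [MeasurableSpace E] (P : Measure E) [IsProbabilityMeasure P]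
    (L : ℕ) (hL : 0 < L)
    (m Ωp : Fin L → ℝ) (hm : ∀ l, 0 < m l) (hΩ : ∀ l, 0 < Ωp l)
    (X : Fin L → E → ℝ) (hX : ∀ l, Measurable (X l))
    (hNak : ∀ l, IsNakagami P (X l) (m l) (Ωp l))
    (hIndep : iIndepFun X P)
    (hm1 : ∀ l, l ≠ ⟨0, hL⟩ → m ⟨0, hL⟩ < m l)
    (s : ℝ) (hs : 0 < s) :
    ∫ ω, Real.exp (-s * ∏ l, X l ω) ∂P ≤
      2 * (Real.Gamma (2 * m ⟨0, hL⟩) / Real.Gamma (m ⟨0, hL⟩)) *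
        (∏ l ∈ Finset.univ.erase ⟨0, hL⟩,
          Real.Gamma (m l - m ⟨0, hL⟩) / Real.Gamma (m l)) *
        (∏ l, Ωp l ^ m ⟨0, hL⟩) * s ^ (-(2 * m ⟨0, hL⟩)) :=
  prod_nakagami_mgf_upper_bound_general P L hL m Ωp hm hΩ X hX hNak hIndep hm1 s hs
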